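/- arXiv:1207.4710 — 3 statements merged into one kernel-verified Lean document; each statement's English description precedes it below -/
import Mathlib

section
/- Let L be a real number with L > 1, let N be a natural number with (N : ℝ) + 1 ≥ 4·L, and let K be a real number with 0 ≤ K ≤ L. Then (2·L/(N+1))·(1 − 2^{−(N+1)}) + 2^{−N}·K < 3/4 (and in particular this quantity is strictly less than 1). -/
/-! The first summand is at most `(2L/(N+1)) (1 - 2^{-(N+1)}) < 1/2` because `N + 1 ≥ 4L`, and the
second is at most `2^{-N} (N+1)/4 ≤ 1/4` because `K ≤ L ≤ (N+1)/4` and `N + 1 ≤ 2^N`. -/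

lemma div_mul_one_sub_two_rpow_neg_lt {L x : ℝ} (hL : 0 ≤ L) (hx : 4 * L ≤ x) :
    2 * L / x * (1 - (2 : ℝ) ^ (-x)) < 1 / 2 := by
  have hx0 : 0 ≤ x := by linarith
  have hratio : 2 * L / x ≤ 1 / 2 := div_le_of_le_mul₀ hx0 (by norm_num) (by linarith)
  have hpow_pos : 0 < (2 : ℝ) ^ (-x) := by positivity
  have hpow_le : (2 : ℝ) ^ (-x) ≤ 1 :=
    Real.rpow_le_one_of_one_le_of_nonpos (by norm_num) (by linarith)
  calc 2 * L / x * (1 - (2 : ℝ) ^ (-x))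
      ≤ 1 / 2 * (1 - (2 : ℝ) ^ (-x)) := by gcongr
    _ < 1 / 2 := by linarith

lemma two_rpow_neg_natCast_mul_le {K : ℝ} {N : ℕ} (hK : 4 * K ≤ N + 1) :
    (2 : ℝ) ^ (-(N : ℝ)) * K ≤ 1 / 4 := by
  have hpow : (2 : ℝ) ^ (-(N : ℝ)) = ((2 : ℝ) ^ N)⁻¹ := by
    rw [Real.rpow_neg zero_le_two, Real.rpow_natCast]
  have hN : (N : ℝ) + 1 ≤ 2 ^ N := by
    exact_mod_cast Nat.lt_two_pow_self
  rw [hpow, inv_mul_le_iff₀ (by positivity)]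
  linarith

theorem stmt_0_general (L : ℝ) (N : ℕ) (hN : (N : ℝ) + 1 ≥ 4 * L)
    (K : ℝ) (hK0 : 0 ≤ K) (hKL : K ≤ L) :
    (2 * L / ((N : ℝ) + 1)) * (1 - (2 : ℝ) ^ (-((N : ℝ) + 1))) +
      (2 : ℝ) ^ (-(N : ℝ)) * K < 3 / 4 ∧
    (2 * L / ((N : ℝ) + 1)) * (1 - (2 : ℝ) ^ (-((N : ℝ) + 1))) +
      (2 : ℝ) ^ (-(N : ℝ)) * K < 1 := by
  have hfirst := div_mul_one_sub_two_rpow_neg_lt (hK0.trans hKL) hN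
  have hsecond : (2 : ℝ) ^ (-(N : ℝ)) * K ≤ 1 / 4 := two_rpow_neg_natCast_mul_le (by linarith)
  constructor <;> linarith

theorem stmt_0 (L : ℝ) (hL : 1 < L) (N : ℕ) (hN : (N : ℝ) + 1 ≥ 4 * L)
    (K : ℝ) (hK0 : 0 ≤ K) (hKL : K ≤ L) :
    (2 * L / ((N : ℝ) + 1)) * (1 - (2 : ℝ) ^ (-((N : ℝ) + 1))) +
      (2 : ℝ) ^ (-(N : ℝ)) * K < 3 / 4 ∧
    (2 * L / ((N : ℝ) + 1)) * (1 - (2 : ℝ) ^ (-((N : ℝ) + 1))) +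
      (2 : ℝ) ^ (-(N : ℝ)) * K < 1 :=
  stmt_0_general L N hN K hK0 hKL
end

section
/- Let L be a real number with L > 1, let N be a natural number with (N : ℝ) + 1 ≥ 4·L, let K be a real number with 0 ≤ K ≤ L, and let M be a real number with M ≥ 1. Then for every natural number j with 1 ≤ j ≤ N: (2·L/(N+1))·(1 − 2^{−(N+1)}) + 2^{−N}·K < (2·L/(N+1))·(1 − 2^{−j}) + 2^{−j}·j·L/(N+1) + 2^{−j}·M. -/
/-!
With `ℓ = L/(N+1)`, `u = 2^(-j)` and `v = 2^(-N)`, the exit term is at most `v L = N v ℓ + v ℓ`.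
Since `n 2^(-n)` is nonincreasing for `n ≥ 1`, `N v ℓ ≤ j u ℓ`, and `v ℓ ≤ u/4`; the remaining
difference `2ℓ u ≤ u/2` is paid for by the retreat cost `u M ≥ u`.
-/

theorem Nat.mul_two_pow_le_mul_two_pow {j n : ℕ} (hj : 1 ≤ j) (hjn : j ≤ n) :
    n * 2 ^ j ≤ j * 2 ^ n := by
  induction n, hjn using Nat.le_induction with
  | base => rfl
  | succ n hjn ih =>
    calc (n + 1) * 2 ^ j ≤ 2 * (n * 2 ^ j) := by nlinarith [Nat.one_le_two_pow (n := j)]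
      _ ≤ 2 * (j * 2 ^ n) := Nat.mul_le_mul_left 2 ih
      _ = j * 2 ^ (n + 1) := by ring

theorem Real.natCast_mul_two_rpow_neg_le {j n : ℕ} (hj : 1 ≤ j) (hjn : j ≤ n) :
    (n : ℝ) * 2 ^ (-(n : ℝ)) ≤ j * 2 ^ (-(j : ℝ)) := by
  have h : ((n * 2 ^ j : ℕ) : ℝ) ≤ (j * 2 ^ n : ℕ) := by
    exact_mod_cast Nat.mul_two_pow_le_mul_two_pow hj hjn
  simp only [Real.rpow_neg zero_le_two, Real.rpow_natCast, ← div_eq_mul_inv]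
  rw [div_le_div_iff₀ (by positivity) (by positivity)]
  push_cast at h
  exact h

theorem stmt_1_general (L : ℝ) (hL : 1 < L) (N : ℕ) (hN : (N : ℝ) + 1 ≥ 4 * L)
    (K : ℝ) (hKL : K ≤ L) (M : ℝ) (hM : M ≥ 1) :
    ∀ j : ℕ, 1 ≤ j → j ≤ N →
      (2 * L / ((N : ℝ) + 1)) * (1 - (2 : ℝ) ^ (-((N : ℝ) + 1))) +
          (2 : ℝ) ^ (-(N : ℝ)) * K <
        (2 * L / ((N : ℝ) + 1)) * (1 - (2 : ℝ) ^ (-(j : ℝ))) +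
          (2 : ℝ) ^ (-(j : ℝ)) * (j : ℝ) * L / ((N : ℝ) + 1) +
          (2 : ℝ) ^ (-(j : ℝ)) * M := by
  intro j hj hjN
  have hN1 : (0 : ℝ) < N + 1 := by positivity
  set ℓ := L / ((N : ℝ) + 1) with hℓ_def
  set u := (2 : ℝ) ^ (-(j : ℝ))
  set v := (2 : ℝ) ^ (-(N : ℝ))
  have hv_succ : (2 : ℝ) ^ (-((N : ℝ) + 1)) = v / 2 := by
    rw [neg_add, Real.rpow_add two_pos, Real.rpow_neg_one]; ring
  have hℓ_pos : 0 < ℓ := by positivity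
  have hℓ_le : ℓ ≤ 1 / 4 := by rw [div_le_div_iff₀ hN1 four_pos]; linarith
  have hL_eq : L = (N + 1) * ℓ := by rw [hℓ_def, mul_div_cancel₀ L hN1.ne']
  have hv_pos : 0 < v := by positivity
  have hvu : v ≤ u := Real.rpow_le_rpow_of_exponent_le one_le_two (by simpa using hjN)
  have hdecay : (N : ℝ) * v ≤ j * u := Real.natCast_mul_two_rpow_neg_le hj hjN
  rw [hv_succ, mul_div_assoc 2, mul_div_assoc, ← hℓ_def]
  nlinarith [mul_le_mul_of_nonneg_left hKL hv_pos.le, mul_le_mul_of_nonneg_right hdecay hℓ_pos.le,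
    mul_le_mul hℓ_le hvu hv_pos.le (by norm_num), mul_le_mul_of_nonneg_left hM (hv_pos.le.trans hvu),
    mul_pos hℓ_pos hv_pos]

theorem stmt_1 (L : ℝ) (hL : 1 < L) (N : ℕ) (hN : (N : ℝ) + 1 ≥ 4 * L)
    (K : ℝ) (hK0 : 0 ≤ K) (hKL : K ≤ L) (M : ℝ) (hM : M ≥ 1) :
    ∀ j : ℕ, 1 ≤ j → j ≤ N →
      (2 * L / ((N : ℝ) + 1)) * (1 - (2 : ℝ) ^ (-((N : ℝ) + 1))) +
          (2 : ℝ) ^ (-(N : ℝ)) * K <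
        (2 * L / ((N : ℝ) + 1)) * (1 - (2 : ℝ) ^ (-(j : ℝ))) +
          (2 : ℝ) ^ (-(j : ℝ)) * (j : ℝ) * L / ((N : ℝ) + 1) +
          (2 : ℝ) ^ (-(j : ℝ)) * M :=
  stmt_1_general L hL N hN K hKL M hM
end

section
/- Let L and N be real numbers with L > 1 and N ≥ 4·L − 1. Then for every real number x with 0 ≤ x ≤ N: (1/4)·(2 − x) + 2^{x−N}·L < 1. -/
/-!
The left-hand side is an affine function plus a multiple of an exponential, hence convex, so on
`[0, N]` it stays below its larger endpoint value. At `x = N` it is `L + (2 - N) / 4 < 1`; at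
`x = 0` it is `1 / 2 + L / 2 ^ N < 1`, because Bernoulli's inequality gives `2 ^ N ≥ 1 + N ≥ 4 L`.
-/

open Real Set

theorem one_add_le_two_rpow {x : ℝ} (hx : 1 ≤ x) : 1 + x ≤ (2 : ℝ) ^ x := by
  simpa [one_add_one_eq_two] using one_add_mul_self_le_rpow_one_add (s := 1) (by norm_num) hx

theorem ConvexOn.lt_of_mem_Icc {𝕜 β : Type*} [Field 𝕜] [LinearOrder 𝕜] [IsStrictOrderedRing 𝕜]
    [AddCommMonoid β] [LinearOrder β] [IsOrderedAddMonoid β] [Module 𝕜 β] [PosSMulStrictMono 𝕜 β]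
    {f : 𝕜 → β} {a b x : 𝕜} {c : β} (hf : ConvexOn 𝕜 (Icc a b) f)
    (ha : f a < c) (hb : f b < c) (hx : x ∈ Icc a b) : f x < c := by
  have hab : a ≤ b := hx.1.trans hx.2
  refine (hf.le_on_segment (left_mem_Icc.2 hab) (right_mem_Icc.2 hab) ?_).trans_lt (max_lt ha hb)
  rwa [segment_eq_Icc hab]

theorem convexOn_quarter_two_sub_add_two_rpow_sub_mul {L : ℝ} (hL : 0 ≤ L) (N : ℝ) :
    ConvexOn ℝ univ (fun x : ℝ => (1 / 4) * (2 - x) + (2 : ℝ) ^ (x - N) * L) := by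
  have hexp : ConvexOn ℝ univ (fun x : ℝ => (2 : ℝ) ^ (x - N)) := by
    simpa [Function.comp_def, sub_eq_neg_add] using
      (convexOn_rpow_left (b := 2) (by norm_num)).translate_right (-N)
  have hsum := ((hexp.smul hL).sub ((concaveOn_id convex_univ).smul (c := (1 / 4 : ℝ))
    (by norm_num))).add_const (1 / 2)
  refine hsum.congr fun x _ => ?_
  simp only [Pi.add_apply, Pi.sub_apply, smul_eq_mul, id]
  ring

theorem stmt_2 (L N : ℝ) (hL : 1 < L) (hN : N ≥ 4 * L - 1) :
    ∀ x : ℝ, 0 ≤ x → x ≤ N →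
      (1 / 4) * (2 - x) + (2 : ℝ) ^ (x - N) * L < 1 := by
  intro x hx0 hxN
  have hpow : 4 * L ≤ (2 : ℝ) ^ N := by linarith [one_add_le_two_rpow (x := N) (by linarith)]
  have hleft : (1 / 4) * (2 - 0) + (2 : ℝ) ^ (0 - N) * L < 1 := by
    have hsmall : L / 2 ^ N < 1 / 2 := by
      rw [div_lt_iff₀ (by positivity)]
      linarith
    rw [zero_sub, rpow_neg zero_le_two, inv_mul_eq_div]
    linarith
  have hright : (1 / 4) * (2 - N) + (2 : ℝ) ^ (N - N) * L < 1 := by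
    rw [sub_self, rpow_zero]
    linarith
  have hconv := (convexOn_quarter_two_sub_add_two_rpow_sub_mul (by linarith : 0 ≤ L) N).subset
    (subset_univ _) (convex_Icc 0 N)
  exact hconv.lt_of_mem_Icc hleft hright ⟨hx0, hxN⟩
end
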